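/- Let $d \geq 3$ be a prime number. Define the $(d-1) \times (d-1)$ integer matrix $M$ (indexed by $i, j \in \{1, \dots, d-1\}$) by: $M_{ij} = -\sum_{r=0}^{i-1} \left(\!\binom{d}{r}\!\right)\left(\!\binom{d}{(j-i)+r}\!\right)$ if $i < j$; $M_{ij} = -\sum_{r=1}^{i-1} \left(\!\binom{d}{r}\!\right)^2$ if $i = j$; and $M_{ij} = -\sum_{r=1}^{j-1} \left(\!\binom{d}{(i-j)+r}\!\right)\left(\!\binom{d}{r}\!\right) + \left(\!\binom{d}{i-j}\!\right)$ if $i > j$. Then $d$ divides every entry $M_{ij}$. -/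

import Mathlib

open Finset

/-- The multicombination (multisubset) symbol $\left(\!\binom{d}{r}\!\right) = \binom{d+r-1}{r}$,
regarded as an integer. -/
def multicomb (d r : ℕ) : ℤ := ((d + r - 1).choose r : ℤ)

theorem Nat.Prime.dvd_multicomb {p r : ℕ} (hp : p.Prime) (hr : 0 < r) (hrp : r < p) :
    (p : ℤ) ∣ multicomb p r :=
  Int.natCast_dvd_natCast.mpr (hp.dvd_choose hrp (by omega) (by omega))

-- Entries are indexed by `Fin (d - 1)`: the paper's index `i ∈ {1, …, d-1}` is `i.val + 1`.
theorem prime_dvd_matrix_entries_general (d : ℕ) (hd : Nat.Prime d)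
    (M : Matrix (Fin (d - 1)) (Fin (d - 1)) ℤ)
    (hM : ∀ i j : Fin (d - 1), M i j =
      if (i : ℕ) < (j : ℕ) then
        -∑ r ∈ Finset.range ((i : ℕ) + 1), multicomb d r * multicomb d (((j : ℕ) - (i : ℕ)) + r)
      else if (i : ℕ) = (j : ℕ) then
        -∑ r ∈ Finset.Icc 1 (i : ℕ), (multicomb d r) ^ 2
      else
        -∑ r ∈ Finset.Icc 1 (j : ℕ), multicomb d (((i : ℕ) - (j : ℕ)) + r) * multicomb d r
          + multicomb d ((i : ℕ) - (j : ℕ))) :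
    ∀ i j : Fin (d - 1), (d : ℤ) ∣ M i j := by
  -- Every summand contains a factor `((d;s))` with `0 < s < d`.
  intro i j
  have hi := i.isLt
  have hj := j.isLt
  rw [hM]
  split_ifs with hlt heq
  · refine dvd_neg.mpr (dvd_sum fun r hr => ?_)
    have hr := mem_range.mp hr
    exact (hd.dvd_multicomb (by omega) (by omega)).mul_left _
  · refine dvd_neg.mpr (dvd_sum fun r hr => ?_)
    have hr := mem_Icc.mp hr
    exact (hd.dvd_multicomb (by omega) (by omega)).pow two_ne_zero
  · refine dvd_add (dvd_neg.mpr (dvd_sum fun r hr => ?_)) (hd.dvd_multicomb (by omega) (by omega))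
    have hr := mem_Icc.mp hr
    exact (hd.dvd_multicomb (by omega) (by omega)).mul_right _

/-- Let `d ≥ 3` be prime, and let `M` be the `(d-1) × (d-1)` integer matrix
(indexed here by `Fin (d-1)`, corresponding to indices `1, …, d-1` via `i ↦ i.val + 1`) with
`M i j = -∑_{r=0}^{i-1} ((d;r))((d;(j-i)+r))` for `i < j`,
`M i i = -∑_{r=1}^{i-1} ((d;r))²`, and
`M i j = -∑_{r=1}^{j-1} ((d;(i-j)+r))((d;r)) + ((d;i-j))` for `i > j`
(indices `i, j` taken in `{1, …, d-1}`). Then `d` divides every entry of `M`. -/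
theorem prime_dvd_matrix_entries (d : ℕ) (hd : Nat.Prime d) (hd3 : 3 ≤ d)
    (M : Matrix (Fin (d - 1)) (Fin (d - 1)) ℤ)
    (hM : ∀ i j : Fin (d - 1), M i j =
      if (i : ℕ) < (j : ℕ) then
        -∑ r ∈ Finset.range ((i : ℕ) + 1), multicomb d r * multicomb d (((j : ℕ) - (i : ℕ)) + r)
      else if (i : ℕ) = (j : ℕ) then
        -∑ r ∈ Finset.Icc 1 (i : ℕ), (multicomb d r) ^ 2
      else
        -∑ r ∈ Finset.Icc 1 (j : ℕ), multicomb d (((i : ℕ) - (j : ℕ)) + r) * multicomb d r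
          + multicomb d ((i : ℕ) - (j : ℕ))) :
    ∀ i j : Fin (d - 1), (d : ℤ) ∣ M i j :=
  prime_dvd_matrix_entries_general d hd M hM
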